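/- arXiv:1208.2794 — 3 statements merged into one kernel-verified Lean document; each statement's English description precedes it below -/
import Mathlib

section
/- The closed unit ball is invariant under the flow of the controlled Kossakowsky–Lindblad system dx/dt = -Γx + u₂z, dy/dt = -Γy - u₁z, dz/dt = γ₋ - γ₊z + u₁y - u₂x: if the dissipative parameters satisfy 2Γ ≥ γ₊ ≥ |γ₋|, then any solution with |q(0)| ≤ 1 satisfies |q(t)| ≤ 1 for all t ≥ 0. -/
/-!
The controls act on `q = (x, y, z)` by infinitesimal rotations, so they drop out of the
derivative of `r = |q|² - 1`. What remains satisfies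
`r' + γ₊ r = -(2Γ - γ₊)(x² + y²) - ((γ₊ + γ₋)(z - 1)² + (γ₊ - γ₋)(z + 1)²) / 2 ≤ 0`,
and Grönwall's inequality turns `r' ≤ -γ₊ r`, `r 0 ≤ 0` into `r ≤ 0` for all later times.
-/

open Set

theorem nonpos_of_hasDerivAt_le_mul_self {f f' : ℝ → ℝ} {K a : ℝ}
    (hf : ∀ t ∈ Ici a, HasDerivAt f (f' t) t) (bound : ∀ t ∈ Ici a, f' t ≤ K * f t)
    (ha : f a ≤ 0) : ∀ t ∈ Ici a, f t ≤ 0 := by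
  intro t ht
  have hIcc : Icc a t ⊆ Ici a := Icc_subset_Ici_self
  have hIco : Ico a t ⊆ Ici a := Ico_subset_Ici_self
  calc f t
      ≤ gronwallBound 0 K 0 (t - a) :=
        le_gronwallBound_of_liminf_deriv_right_le
          (fun s hs => (hf s (hIcc hs)).continuousAt.continuousWithinAt)
          (fun s hs _ hr => (hf s (hIco hs)).hasDerivWithinAt.liminf_right_slope_le hr) ha
          (fun s hs => by simpa using bound s (hIco hs)) t ⟨ht, le_rfl⟩
    _ = 0 := gronwallBound_ε0_δ0 K _

theorem bloch_radial_deriv_le {Γ γp γm : ℝ} (hΓ : γp ≤ 2 * Γ) (hγ : |γm| ≤ γp)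
    (u₁ u₂ x y z : ℝ) :
    2 * (x * (-Γ * x + u₂ * z) + y * (-Γ * y - u₁ * z) + z * (γm - γp * z + u₁ * y - u₂ * x))
      ≤ -γp * (x ^ 2 + y ^ 2 + z ^ 2 - 1) := by
  obtain ⟨hm₁, hm₂⟩ := abs_le.mp hγ
  nlinarith [mul_nonneg (by linarith : (0:ℝ) ≤ γp + γm) (sq_nonneg (z - 1)),
    mul_nonneg (by linarith : (0:ℝ) ≤ γp - γm) (sq_nonneg (z + 1)),
    mul_nonneg (by linarith : (0:ℝ) ≤ 2 * Γ - γp) (add_nonneg (sq_nonneg x) (sq_nonneg y))]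

theorem HasDerivAt.sq_add_sq_add_sq_sub_one {x y z : ℝ → ℝ} {x' y' z' t : ℝ}
    (hx : HasDerivAt x x' t) (hy : HasDerivAt y y' t) (hz : HasDerivAt z z' t) :
    HasDerivAt (fun s => x s ^ 2 + y s ^ 2 + z s ^ 2 - 1)
      (2 * (x t * x' + y t * y' + z t * z')) t := by
  refine (((hx.fun_pow 2).fun_add (hy.fun_pow 2)).fun_add (hz.fun_pow 2)).sub_const 1
    |>.congr_deriv ?_
  push_cast
  ring

/-- The closed unit ball is invariant under the flow of the controlled
Kossakowsky–Lindblad system. -/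
theorem bloch_ball_invariant
    (Γ γp γm : ℝ) (hΓ : γp ≤ 2 * Γ) (hγ : |γm| ≤ γp)
    (u₁ u₂ : ℝ → ℝ) (x y z : ℝ → ℝ)
    (hx : ∀ t ∈ Set.Ici (0:ℝ), HasDerivAt x (-Γ * x t + u₂ t * z t) t)
    (hy : ∀ t ∈ Set.Ici (0:ℝ), HasDerivAt y (-Γ * y t - u₁ t * z t) t)
    (hz : ∀ t ∈ Set.Ici (0:ℝ),
      HasDerivAt z (γm - γp * z t + u₁ t * y t - u₂ t * x t) t)
    (h0 : x 0 ^ 2 + y 0 ^ 2 + z 0 ^ 2 ≤ 1) :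
    ∀ t ∈ Set.Ici (0:ℝ), x t ^ 2 + y t ^ 2 + z t ^ 2 ≤ 1 := by
  intro t ht
  have hr := nonpos_of_hasDerivAt_le_mul_self
    (fun s hs => (hx s hs).sq_add_sq_add_sq_sub_one (hy s hs) (hz s hs))
    (fun s _ => bloch_radial_deriv_le hΓ hγ (u₁ s) (u₂ s) (x s) (y s) (z s))
    (sub_nonpos.mpr h0) t ht
  linarith
end

section
/- For the 2D single-spin system, the singular set S = {q ∈ ℝ² : det(F₁(q), [F₁,F₀](q)) = 0} equals the union of the line y = 0 and, when δ ≠ 0, the horizontal line z = γ/(2δ); indeed det(F₁, [F₁,F₀]) = -y(-2δz + γ) up to sign, i.e., the determinant vanishes iff y(γ - 2δz) = 0. -/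
/-- 2×2 determinant of the matrix with columns `v`, `w`. -/
def det2 (v w : ℝ × ℝ) : ℝ := v.1 * w.2 - v.2 * w.1

theorem det2_rotation_bracket (γ δ : ℝ) (q : ℝ × ℝ) :
    det2 (-q.2, q.1) (-γ + δ * q.2, δ * q.1) = q.1 * (γ - 2 * δ * q.2) := by
  simp only [det2]
  ring

theorem mul_sub_mul_eq_zero_iff {a b c z : ℝ} (hb : b ≠ 0) :
    a * (c - b * z) = 0 ↔ a = 0 ∨ z = c / b := by
  rw [mul_eq_zero, sub_eq_zero, eq_div_iff hb, mul_comm z, eq_comm (a := c)]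

theorem single_spin_singular_set_general (γ : ℝ) (δ : ℝ)
    (F₁ brk : ℝ × ℝ → ℝ × ℝ)
    (hF₁ : F₁ = fun q => (-q.2, q.1))
    (hbrk : brk = fun q => (-γ + δ * q.2, δ * q.1)) :
    (∀ q : ℝ × ℝ, det2 (F₁ q) (brk q) = 0 ↔ q.1 * (γ - 2 * δ * q.2) = 0) ∧
    (δ ≠ 0 →
      {q : ℝ × ℝ | det2 (F₁ q) (brk q) = 0} =
        {q : ℝ × ℝ | q.1 = 0} ∪ {q : ℝ × ℝ | q.2 = γ / (2 * δ)}) := by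
  subst hF₁ hbrk
  have hdet (q : ℝ × ℝ) := det2_rotation_bracket γ δ q
  refine ⟨fun q => by rw [hdet], fun hδ => ?_⟩
  ext q
  simp only [Set.mem_ofPred_eq, Set.mem_union, hdet]
  exact mul_sub_mul_eq_zero_iff (mul_ne_zero two_ne_zero hδ)

/-- The singular set `det(F₁,[F₁,F₀]) = 0` of the single-spin system is the union of
the axis `y = 0` and (for `δ ≠ 0`) the horizontal line `z = γ/(2δ)`. -/
theorem single_spin_singular_set (Γ γ : ℝ) (δ : ℝ) (hδ : δ = γ - Γ)
    (F₁ brk : ℝ × ℝ → ℝ × ℝ)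
    (hF₁ : F₁ = fun q => (-q.2, q.1))
    (hbrk : brk = fun q => (-γ + δ * q.2, δ * q.1)) :
    (∀ q : ℝ × ℝ, det2 (F₁ q) (brk q) = 0 ↔ q.1 * (γ - 2 * δ * q.2) = 0) ∧
    (δ ≠ 0 →
      {q : ℝ × ℝ | det2 (F₁ q) (brk q) = 0} =
        {q : ℝ × ℝ | q.1 = 0} ∪ {q : ℝ × ℝ | q.2 = γ / (2 * δ)}) :=
  single_spin_singular_set_general γ δ F₁ brk hF₁ hbrk
end

section
/- If γ ≠ 0 and 0 < 2Γ - γ, the singular control along the horizontal singular line is integrable (L¹) but not square-integrable (L²) near y = 0: for the flow ẏ = -Γy - γ²(2Γ-γ)/(4δ²y) reaching y = 0 from y₀ < 0 in finite time t₁, the integral ∫ |u₁s(t)| dt is finite while ∫ u₁s(t)² dt diverges, since u₁s(t)²·(dy/dt)⁻¹ scales as 1/y as y → 0. -/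
open MeasureTheory Filter Set Topology

/-!
Write `c = γ²(2Γ-γ)/(4δ²) > 0`, so that `ẏ = -Γy - c/y` and `u₁s = k/y`.
Since `-Γy ≥ 0`, the velocity dominates `c/|y|`, so `|k/y| ≤ (|k|/c) ẏ` is bounded by the
derivative of a monotone function and is integrable. On the other hand
`ẏ/y = -Γ - c/y²` is the derivative of `log |y|`, which tends to `-∞` as `y → 0`, so
`1/y²`, and with it `(k/y)²`, is not integrable.
-/

theorem integrableOn_Ico_of_norm_le_deriv {E : Type*} [NormedAddCommGroup E]
    {f : ℝ → E} {g g' : ℝ → ℝ} {a b : ℝ} (hg : ContinuousOn g (Icc a b))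
    (hderiv : ∀ x ∈ Ioo a b, HasDerivAt g (g' x) x) (hf : ContinuousOn f (Ico a b))
    (hfg : ∀ x ∈ Ioo a b, ‖f x‖ ≤ g' x) : IntegrableOn f (Ico a b) := by
  have hg' : IntegrableOn g' (Ioo a b) :=
    (intervalIntegral.integrableOn_deriv_of_nonneg hg hderiv
      fun x hx => (norm_nonneg _).trans (hfg x hx)).mono_set Ioo_subset_Ioc_self
  rw [integrableOn_Ico_iff_integrableOn_Ioo]
  exact hg'.mono' ((hf.mono Ioo_subset_Ico_self).aestronglyMeasurable measurableSet_Ioo)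
    (ae_restrict_of_forall_mem measurableSet_Ioo hfg)

theorem not_integrableOn_deriv_div_self_of_tendsto_zero {g g' : ℝ → ℝ} {b : ℝ} {s : Set ℝ}
    (hs : s ∈ 𝓝[<] b) (hderiv : ∀ᶠ x in 𝓝[<] b, HasDerivAt g (g' x) x)
    (hne : ∀ᶠ x in 𝓝[<] b, g x ≠ 0) (hlim : Tendsto g (𝓝[<] b) (𝓝 0)) :
    ¬ IntegrableOn (fun x => g' x / g x) s := by
  have hlog : ∀ᶠ x in 𝓝[<] b, HasDerivAt (fun x => Real.log (g x)) (g' x / g x) x := by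
    filter_upwards [hderiv, hne] with x hx hx0 using hx.log hx0
  have hg0 : Tendsto g (𝓝[<] b) (𝓝[≠] 0) :=
    tendsto_nhdsWithin_of_tendsto_nhds_of_eventually_within _ hlim hne
  refine not_integrableOn_of_tendsto_norm_atTop_of_deriv_isBigO_filter _ hs
    (hlog.mono fun x hx => hx.differentiableAt) ?_
    (EventuallyEq.isBigO (hlog.mono fun x hx => hx.deriv))
  simp only [Real.norm_eq_abs]
  exact tendsto_abs_atBot_atTop.comp (Real.tendsto_log_nhdsNE_zero.comp hg0)

section Flow

variable {Γ c t₁ : ℝ} {y : ℝ → ℝ}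

theorem integrableOn_inv_of_hasDerivAt_flow (hΓ : 0 ≤ Γ) (hc : 0 < c)
    (hcont : ContinuousOn y (Icc 0 t₁)) (hneg : ∀ t ∈ Ico 0 t₁, y t < 0)
    (hode : ∀ t ∈ Ico 0 t₁, HasDerivAt y (-Γ * y t - c / y t) t) :
    IntegrableOn (fun t => (y t)⁻¹) (Ico 0 t₁) := by
  refine integrableOn_Ico_of_norm_le_deriv (hcont.div_const c)
    (fun t ht => (hode t (Ioo_subset_Ico_self ht)).div_const c)
    ((hcont.mono Ico_subset_Icc_self).inv₀ fun t ht => (hneg t ht).ne) fun t ht => ?_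
  have hyt := hneg t (Ioo_subset_Ico_self ht)
  have hsplit : (-Γ * y t - c / y t) / c = -Γ * y t / c + (-y t)⁻¹ := by
    field_simp
    ring
  rw [norm_inv, Real.norm_eq_abs, abs_of_neg hyt, hsplit, le_add_iff_nonneg_left]
  exact div_nonneg (mul_nonneg_of_nonpos_of_nonpos (neg_nonpos.2 hΓ) hyt.le) hc.le

theorem not_integrableOn_inv_sq_of_hasDerivAt_flow (ht₁ : 0 < t₁)
    (hne : ∀ t ∈ Ico 0 t₁, y t ≠ 0)
    (hode : ∀ t ∈ Ico 0 t₁, HasDerivAt y (-Γ * y t - c / y t) t)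
    (hlim : Tendsto y (𝓝[<] t₁) (𝓝 0)) :
    ¬ IntegrableOn (fun t => (y t ^ 2)⁻¹) (Ico 0 t₁) := by
  intro h
  have hIco : Ico 0 t₁ ∈ 𝓝[<] t₁ := Ico_mem_nhdsLT ht₁
  refine not_integrableOn_deriv_div_self_of_tendsto_zero hIco (eventually_of_mem hIco hode)
    (eventually_of_mem hIco hne) hlim ?_
  have hconst : IntegrableOn (fun _ => -Γ) (Ico 0 t₁) := integrableOn_const measure_Ico_lt_top.ne
  refine IntegrableOn.congr_fun (hconst.sub (h.const_mul c)) (fun t ht => ?_) measurableSet_Ico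
  simp only [Pi.sub_apply]
  field_simp [hne t ht]

end Flow

/-- The singular control along the horizontal singular line is `L¹` but not `L²`
near `y = 0`: along the flow `ẏ = -Γy - γ²(2Γ-γ)/(4δ²y)` reaching `y = 0`
at finite time `t₁`, `∫|u₁s| < ∞` while `∫ u₁s² = ∞`. -/
theorem singular_control_L1_not_L2 (Γ γ : ℝ) (hγ : 0 < γ) (hΓγ : γ < Γ)
    (δ : ℝ) (hδ : δ = γ - Γ) (k : ℝ) (hk : k = γ * (2 * Γ - γ) / (2 * δ))
    (y : ℝ → ℝ) (t₁ : ℝ) (ht₁ : 0 < t₁)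
    (hyneg : ∀ t ∈ Set.Ico (0:ℝ) t₁, y t < 0) (hy1 : y t₁ = 0)
    (hode : ∀ t ∈ Set.Ico (0:ℝ) t₁,
      HasDerivAt y (-Γ * y t - γ ^ 2 * (2 * Γ - γ) / (4 * δ ^ 2 * y t)) t)
    (hcont : ContinuousOn y (Set.Icc 0 t₁)) :
    IntegrableOn (fun t => |k / y t|) (Set.Ico 0 t₁) ∧
    ¬ IntegrableOn (fun t => (k / y t) ^ 2) (Set.Ico 0 t₁) := by
  have hδ0 : δ ≠ 0 := by rw [hδ]; linarith
  have hk0 : k ≠ 0 := by rw [hk]; exact div_ne_zero (by nlinarith) (by simpa using hδ0)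
  set c := γ ^ 2 * (2 * Γ - γ) / (4 * δ ^ 2)
  have hc : 0 < c := div_pos (mul_pos (by positivity) (by linarith)) (by positivity)
  have hflow : ∀ t ∈ Ico 0 t₁, HasDerivAt y (-Γ * y t - c / y t) t := by
    intro t ht
    simpa only [c, div_div] using hode t ht
  have hlim : Tendsto y (𝓝[<] t₁) (𝓝 0) := by
    rw [← hy1]
    exact ((hcont t₁ (right_mem_Icc.2 ht₁.le)).mono_of_mem_nhdsWithin
      (mem_of_superset (Ico_mem_nhdsLT ht₁) Ico_subset_Icc_self)).tendsto
  constructor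
  · refine IntegrableOn.congr_fun
      ((integrableOn_inv_of_hasDerivAt_flow (by linarith) hc hcont hyneg hflow).norm.const_mul |k|)
      (fun t _ => ?_) measurableSet_Ico
    rw [Real.norm_eq_abs, abs_div, abs_inv, div_eq_mul_inv]
  · intro h
    refine not_integrableOn_inv_sq_of_hasDerivAt_flow ht₁ (fun t ht => (hyneg t ht).ne)
      hflow hlim
      (IntegrableOn.congr_fun (h.const_mul (k ^ 2)⁻¹) (fun t _ => ?_) measurableSet_Ico)
    field_simp
end
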